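/- Let f : ℝ⁵ → ℝ, with arguments written f(x, y, t, p, r), be continuously differentiable and satisfy, for all (x, y, t, p, r) ∈ ℝ⁵ and all q ∈ ℝ, the identity f_x + f_t·p + f_p·q + f_r·f − p·f − e^{2t}·r = 0, where subscripts denote partial derivatives. Then there exists a function K : ℝ → ℝ such that f(x, y, t, p, r)² = (r² + K(y))·e^{2t} for all (x, y, t, p, r) ∈ ℝ⁵. (This is the statement that every hyperbolic equation t_{xy} = f(x, y, t, t_x, t_y) possessing the y-integral I = t_{xx} − (1/2)t_x² − (1/2)e^{2t} has the form t_{xy} = e^t·√(t_y² + K(y)), which coincides with u_{xy} = e^u√(u_y² − 4) up to a point transformation in y.) -/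

import Mathlib

/-!
The identity is affine in `q`, so `f_p = 0`; once `f` is known not to depend on `p` it is affine
in `p`, so `f_t = f` and `f_x + f f_r = e^{2t} r`. Hence `f = C(x, y, r) e^t`, and separating the
powers `e^t` and `e^{2t}` gives `C_x = 0` and `C C_r = r`, i.e. `C² - r²` depends on `y` alone.
-/

open Real

lemma eq_mul_exp_of_deriv_eq_self {g : ℝ → ℝ} (hg : Differentiable ℝ g)
    (h : ∀ t, deriv g t = g t) (t : ℝ) : g t = g 0 * exp t := by
  have hconst : ∀ s, HasDerivAt (fun s => g s * exp (-s)) 0 s := fun s =>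
    ((hg s).hasDerivAt.mul (hasDerivAt_neg s).exp).congr_deriv (by rw [h]; ring)
  have := is_const_of_deriv_eq_zero (fun s => (hconst s).differentiableAt)
    (fun s => (hconst s).deriv) t 0
  calc g t = g t * exp (-t) * exp t := by
        rw [mul_assoc, ← exp_add, neg_add_cancel, exp_zero, mul_one]
    _ = g 0 * exp t := by rw [this, neg_zero, exp_zero, mul_one]

lemma sq_eq_sq_add_sq_of_deriv_mul_self {g : ℝ → ℝ} (hg : Differentiable ℝ g)
    (h : ∀ r, deriv g r * g r = r) (r : ℝ) : g r ^ 2 = r ^ 2 + g 0 ^ 2 := by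
  have hconst : ∀ s, HasDerivAt (fun s => g s ^ 2 - s ^ 2) 0 s := fun s =>
    (((hg s).hasDerivAt.pow 2).sub (hasDerivAt_pow 2 s)).congr_deriv
      (by push_cast; linear_combination (2 : ℝ) * h s)
  have := is_const_of_deriv_eq_zero (fun s => (hconst s).differentiableAt)
    (fun s => (hconst s).deriv) r 0
  linear_combination this

lemma eq_zero_of_forall_mul_exp_add_mul_exp_two_mul {a b : ℝ}
    (h : ∀ t, a * exp t + b * exp (2 * t) = 0) : a = 0 ∧ b = 0 := by
  have h₀ := h 0
  have h₁ := h (log 2)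
  rw [mul_zero, exp_zero] at h₀
  rw [← log_rpow two_pos, exp_log two_pos, exp_log (by positivity)] at h₁
  norm_num at h₁
  constructor <;> linarith

/-- `D_y I = 0` for `I = t_xx - t_x² / 2 - e^{2t} / 2` along `t_xy = f(x, y, t, t_x, t_y)`,
written with `p = t_x`, `q = t_xx`, `r = t_y`. -/
def HasYIntegral (f : ℝ → ℝ → ℝ → ℝ → ℝ → ℝ) : Prop :=
  ∀ x y t p r q : ℝ,
    deriv (fun u => f u y t p r) x + deriv (fun u => f x y u p r) t * p
      + deriv (fun u => f x y t u r) p * q + deriv (fun u => f x y t p u) r * f x y t p r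
      - p * f x y t p r - exp (2 * t) * r = 0

namespace HasYIntegral

variable {f : ℝ → ℝ → ℝ → ℝ → ℝ → ℝ}

lemma deriv_p_eq_zero (hI : HasYIntegral f) (x y t p r : ℝ) :
    deriv (fun u => f x y t u r) p = 0 := by
  linarith [hI x y t p r 0, hI x y t p r 1]

lemma apply_eq_apply_zero (hI : HasYIntegral f)
    (hp : ∀ x y t r, Differentiable ℝ fun u => f x y t u r) (x y t p r : ℝ) :
    f x y t p r = f x y t 0 r :=
  is_const_of_deriv_eq_zero (hp x y t r) (fun u => hI.deriv_p_eq_zero x y t u r) p 0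

lemma deriv_t_eq_self (hI : HasYIntegral f)
    (hp : ∀ x y t r, Differentiable ℝ fun u => f x y t u r) (x y t r : ℝ) :
    deriv (fun u => f x y u 0 r) t = f x y t 0 r := by
  have h₁ := hI x y t 1 r 0
  simp only [hI.apply_eq_apply_zero hp _ _ _ 1] at h₁
  linarith [hI x y t 0 r 0]

lemma apply_zero_eq_mul_exp (hI : HasYIntegral f)
    (hp : ∀ x y t r, Differentiable ℝ fun u => f x y t u r)
    (ht : ∀ x y p r, Differentiable ℝ fun u => f x y u p r) (x y t r : ℝ) :
    f x y t 0 r = f x y 0 0 r * exp t :=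
  eq_mul_exp_of_deriv_eq_self (ht x y 0 r) (hI.deriv_t_eq_self hp x y · r) t

lemma deriv_x_eq_zero_and_deriv_r_mul_self (hI : HasYIntegral f)
    (hp : ∀ x y t r, Differentiable ℝ fun u => f x y t u r)
    (ht : ∀ x y p r, Differentiable ℝ fun u => f x y u p r) (x y r : ℝ) :
    deriv (fun u => f u y 0 0 r) x = 0 ∧ deriv (fun u => f x y 0 0 u) r * f x y 0 0 r = r := by
  have hexp := hI.apply_zero_eq_mul_exp hp ht
  obtain ⟨hx, hr⟩ := eq_zero_of_forall_mul_exp_add_mul_exp_two_mul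
    (a := deriv (fun u => f u y 0 0 r) x)
    (b := deriv (fun u => f x y 0 0 u) r * f x y 0 0 r - r) fun t => by
    have h := hI x y t 0 r 0
    simp only [hexp _ _ t, deriv_mul_const_field] at h
    rw [two_mul, exp_add] at h ⊢
    linear_combination h
  exact ⟨hx, sub_eq_zero.mp hr⟩

lemma sq_eq_sq_add_mul_exp (hI : HasYIntegral f)
    (hx : ∀ y t p r, Differentiable ℝ fun u => f u y t p r)
    (hp : ∀ x y t r, Differentiable ℝ fun u => f x y t u r)
    (ht : ∀ x y p r, Differentiable ℝ fun u => f x y u p r)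
    (hr : ∀ x y t p, Differentiable ℝ fun u => f x y t p u) (x y t p r : ℝ) :
    f x y t p r ^ 2 = (r ^ 2 + f 0 y 0 0 0 ^ 2) * exp (2 * t) := by
  have hC := hI.deriv_x_eq_zero_and_deriv_r_mul_self hp ht
  have hC₀ : f x y 0 0 0 = f 0 y 0 0 0 :=
    is_const_of_deriv_eq_zero (hx y 0 0 0) (fun u => (hC u y 0).1) x 0
  rw [hI.apply_eq_apply_zero hp, hI.apply_zero_eq_mul_exp hp ht, mul_pow,
    sq_eq_sq_add_sq_of_deriv_mul_self (hr x y 0 0) (fun r => (hC x y r).2), hC₀, two_mul, exp_add,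
    ← sq]

end HasYIntegral

/-- every hyperbolic equation `t_{xy} = f(x,y,t,t_x,t_y)` possessing the
y-integral `I = t_{xx} - (1/2)t_x² - (1/2)e^{2t}` satisfies `f² = (t_y² + K(y)) e^{2t}`. -/
theorem stmt_16 (f : ℝ → ℝ → ℝ → ℝ → ℝ → ℝ)
    (hf : ContDiff ℝ 1
      (fun v : ℝ × ℝ × ℝ × ℝ × ℝ => f v.1 v.2.1 v.2.2.1 v.2.2.2.1 v.2.2.2.2))
    (hI : ∀ x y t p r : ℝ, ∀ q : ℝ,
      deriv (fun u => f u y t p r) x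
        + deriv (fun u => f x y u p r) t * p
        + deriv (fun u => f x y t u r) p * q
        + deriv (fun u => f x y t p u) r * f x y t p r
        - p * f x y t p r - Real.exp (2 * t) * r = 0) :
    ∃ K : ℝ → ℝ, ∀ x y t p r : ℝ, (f x y t p r)^2 = (r^2 + K y) * Real.exp (2 * t) := by
  have hD := hf.differentiable one_ne_zero
  exact ⟨fun y => f 0 y 0 0 0 ^ 2, HasYIntegral.sq_eq_sq_add_mul_exp hI
    (fun y t p r => hD.comp (by fun_prop : Differentiable ℝ (·, y, t, p, r)))
    (fun x y t r => hD.comp (by fun_prop : Differentiable ℝ (x, y, t, ·, r)))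
    (fun x y p r => hD.comp (by fun_prop : Differentiable ℝ (x, y, ·, p, r)))
    (fun x y t p => hD.comp (by fun_prop : Differentiable ℝ (x, y, t, p, ·)))⟩
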